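/- Let K_X and K_Y be real symmetric positive semidefinite M×M matrices with Tr K_X = Tr K_Y = 1 and K_X ≠ K_Y. Then the squared Bures distance satisfies d_B(K_X, K_Y)² ≥ 2 − √(4 − 2 ‖K_X − K_Y‖_F²), where d_B(K_X, K_Y)² = 2 − 2 Tr[(K_X^{1/2} K_Y K_X^{1/2})^{1/2}] and ‖·‖_F is the Frobenius norm. -/

import Mathlib

/-!
Uhlmann's theorem in elementary form: with `A = K_X^{1/2}`, `B = K_Y^{1/2}` and
`T = (A K_Y A)^{1/2}`, a polar decomposition `A B U = [T 0]` with `U Uᵀ = 1` gives `ψ = [A 0]` and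
`φ = B U` with `ψψᵀ = K_X`, `φφᵀ = K_Y` and `Tr(ψᵀφ) = F`. For any such pair the swap trick
(swapping the tensor factors is an isometry, so `⟨v, swap v⟩ ≤ ‖v‖²` for `v = ψ ⊗ ψ - φ ⊗ φ`),
together with `Tr(R²) ≤ Tr(RᵀR) = Tr(K_X K_Y)` for `R = ψᵀφ`, yields
`‖K_X - K_Y‖_F² ≤ ‖ψ‖⁴ + ‖φ‖⁴ - 2⟨ψ, φ⟩² = 2 - 2F²` for unit traces.
-/

open Matrix

/-- The squared Frobenius norm of a real matrix. -/
def frobSq {m n : Type*} [Fintype m] [Fintype n] (A : Matrix m n ℝ) : ℝ :=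
  ∑ i, ∑ j, A i j ^ 2

open scoped ComplexOrder in
/-- The positive semidefinite square root of a positive semidefinite matrix
(the definition of Mathlib of December 2024, since removed). -/
noncomputable def Matrix.PosSemidef.sqrt {n 𝕜 : Type*} [Fintype n] [DecidableEq n] [RCLike 𝕜]
    {A : Matrix n n 𝕜} (hA : A.PosSemidef) : Matrix n n 𝕜 :=
  (hA.1.eigenvectorUnitary : Matrix n n 𝕜) * diagonal ((↑) ∘ (√·) ∘ hA.1.eigenvalues) *
    (star hA.1.eigenvectorUnitary : Matrix n n 𝕜)

open scoped ComplexOrder in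
lemma Matrix.PosSemidef.posSemidef_sqrt {n 𝕜 : Type*} [Fintype n] [DecidableEq n] [RCLike 𝕜]
    {A : Matrix n n 𝕜} (hA : A.PosSemidef) : hA.sqrt.PosSemidef := by
  have hD : (diagonal ((↑) ∘ (√·) ∘ hA.1.eigenvalues) : Matrix n n 𝕜).PosSemidef := by
    rw [posSemidef_diagonal_iff]
    intro i
    simp [Real.sqrt_nonneg]
  have := hD.mul_mul_conjTranspose_same (hA.1.eigenvectorUnitary : Matrix n n 𝕜)
  simpa [Matrix.PosSemidef.sqrt, Matrix.star_eq_conjTranspose] using this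

lemma sqrt_mul_mul_sqrt_posSemidef {M : ℕ} {KX KY : Matrix (Fin M) (Fin M) ℝ}
    (hX : KX.PosSemidef) (hY : KY.PosSemidef) :
    (hX.sqrt * KY * hX.sqrt).PosSemidef := by
  have h := hY.mul_mul_conjTranspose_same hX.sqrt
  rwa [hX.posSemidef_sqrt.isHermitian.eq] at h

/-- The fidelity `F(K_X, K_Y) = Tr[(K_X^{1/2} K_Y K_X^{1/2})^{1/2}]` between positive
semidefinite matrices. -/
noncomputable def fidelity {M : ℕ} {KX KY : Matrix (Fin M) (Fin M) ℝ}
    (hX : KX.PosSemidef) (hY : KY.PosSemidef) : ℝ :=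
  (sqrt_mul_mul_sqrt_posSemidef hX hY).sqrt.trace

namespace Matrix

open scoped ComplexOrder

variable {n 𝕜 : Type*} [Fintype n] [DecidableEq n] [RCLike 𝕜]

namespace IsHermitian

variable {A : Matrix n n 𝕜}

lemma cfc_mul_cfc (hA : A.IsHermitian) (f g : ℝ → ℝ) :
    hA.cfc f * hA.cfc g = hA.cfc (fun x => f x * g x) := by
  simp only [IsHermitian.cfc, ← map_mul, diagonal_mul_diagonal]
  congr with i
  simp

lemma cfc_congr (hA : A.IsHermitian) {f g : ℝ → ℝ}
    (h : ∀ i, f (hA.eigenvalues i) = g (hA.eigenvalues i)) : hA.cfc f = hA.cfc g := by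
  simp only [IsHermitian.cfc]
  congr 2
  funext i
  simp [h i]

lemma cfc_id_eq (hA : A.IsHermitian) : hA.cfc id = A := by
  rw [← hA.cfc_eq]
  exact cfc_id ℝ A

lemma isHermitian_cfc (hA : A.IsHermitian) (f : ℝ → ℝ) : (hA.cfc f).IsHermitian := by
  rw [← hA.cfc_eq]
  exact cfc_predicate f A

-- The pseudoinverse is `x ↦ x⁻¹` applied to the eigenvalues, using `0⁻¹ = 0`.
lemma exists_pseudoinverse (hA : A.IsHermitian) :
    ∃ C : Matrix n n 𝕜, C.IsHermitian ∧ Commute A C ∧ A * C * A = A ∧ C * A * C = C := by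
  have key : ∃ C : Matrix n n 𝕜, C.IsHermitian ∧ Commute (hA.cfc id) C ∧
      hA.cfc id * C * hA.cfc id = hA.cfc id ∧ C * hA.cfc id * C = C := by
    refine ⟨hA.cfc (·⁻¹), hA.isHermitian_cfc _, ?_, ?_, ?_⟩ <;>
      simp only [Commute, SemiconjBy, cfc_mul_cfc]
    · exact hA.cfc_congr fun _ => mul_comm _ _
    · exact hA.cfc_congr fun _ => mul_inv_mul_cancel _
    · exact hA.cfc_congr fun i => by simpa using mul_inv_mul_cancel (hA.eigenvalues i)⁻¹
  simpa only [hA.cfc_id_eq] using key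

end IsHermitian

lemma PosSemidef.sqrt_eq_cfc {A : Matrix n n 𝕜} (hA : A.PosSemidef) :
    hA.sqrt = hA.1.cfc Real.sqrt := by
  rw [IsHermitian.cfc, Unitary.conjStarAlgAut_apply]
  rfl

lemma PosSemidef.sqrt_mul_self {A : Matrix n n 𝕜} (hA : A.PosSemidef) :
    hA.sqrt * hA.sqrt = A := by
  rw [hA.sqrt_eq_cfc, IsHermitian.cfc_mul_cfc]
  conv_rhs => rw [← hA.1.cfc_id_eq]
  exact hA.1.cfc_congr fun i => Real.mul_self_sqrt (hA.eigenvalues_nonneg i)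

lemma fromCols_mul_conjTranspose_fromCols_eq_one {m α : Type*} [Fintype m] [Ring α] [StarRing α]
    {V : Matrix n m α} (hV : V * Vᴴ * V = V) :
    fromCols V (1 - V * Vᴴ) * (fromCols V (1 - V * Vᴴ))ᴴ = 1 := by
  have hP : V * Vᴴ * (V * Vᴴ) = V * Vᴴ := by rw [← Matrix.mul_assoc, hV]
  simp only [conjTranspose_fromCols_eq_fromRows_conjTranspose, fromCols_mul_fromRows,
    conjTranspose_sub, conjTranspose_one, conjTranspose_mul, conjTranspose_conjTranspose,
    Matrix.sub_mul, Matrix.mul_sub, Matrix.one_mul, Matrix.mul_one, hP]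
  abel

theorem IsHermitian.exists_coisometry_mul_eq_fromCols {T X : Matrix n n 𝕜} (hT : T.IsHermitian)
    (hX : X * Xᴴ = T * T) : ∃ U : Matrix n (n ⊕ n) 𝕜, U * Uᴴ = 1 ∧ X * U = fromCols T 0 := by
  obtain ⟨C, hC, hTC, hTCT, hCTC⟩ := hT.exists_pseudoinverse
  set V := Xᴴ * C
  have hXV : X * V = T := by
    rw [← Matrix.mul_assoc, hX, Matrix.mul_assoc, hTC.eq, ← Matrix.mul_assoc, hTCT]
  have hV : V * Vᴴ * V = V := by
    have hVV : Vᴴ * V = C * T := by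
      rw [conjTranspose_mul, conjTranspose_conjTranspose, hC.eq, Matrix.mul_assoc, hXV]
    rw [Matrix.mul_assoc, hVV, ← hTC.eq, Matrix.mul_assoc, ← Matrix.mul_assoc C, hCTC]
  have hker : X * (1 - V * Vᴴ) = 0 := by
    have hTTC : (1 - T * C) * (X * Xᴴ) = 0 := by
      rw [hX, Matrix.sub_mul, Matrix.one_mul, ← Matrix.mul_assoc, hTCT, sub_self]
    rw [mul_self_mul_conjTranspose_eq_zero, Matrix.sub_mul, Matrix.one_mul] at hTTC
    rwa [Matrix.mul_sub, Matrix.mul_one, ← Matrix.mul_assoc, hXV, conjTranspose_mul,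
      conjTranspose_conjTranspose, hC.eq, ← Matrix.mul_assoc]
  exact ⟨_, fromCols_mul_conjTranspose_fromCols_eq_one hV, by rw [mul_fromCols, hXV, hker]⟩

end Matrix

section Gram

variable {m k : Type*} [Fintype m] [Fintype k]

lemma frobSq_eq_trace_mul_transpose (A : Matrix m k ℝ) : frobSq A = trace (A * Aᵀ) := by
  simp [frobSq, trace, mul_apply, pow_two]

lemma sum_mul_mul_swap_eq_trace (P Q R S : Matrix m k ℝ) :
    ∑ a, ∑ b, ∑ i, ∑ j, P i a * Q j b * (R i b * S j a) = trace (Pᵀ * R * (Qᵀ * S)) := by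
  simp only [trace, Matrix.diag, mul_apply, transpose_apply, Finset.sum_mul_sum, mul_comm,
    mul_left_comm]

lemma sum_mul_mul_eq_trace_mul_trace (P Q R S : Matrix m k ℝ) :
    ∑ a, ∑ b, ∑ i, ∑ j, P i a * Q j b * (R i a * S j b) = trace (Pᵀ * R) * trace (Qᵀ * S) := by
  simp only [trace, Matrix.diag, mul_apply, transpose_apply, Finset.sum_mul_sum, mul_comm,
    mul_left_comm]

theorem trace_transpose_mul_sq_sub_le (ψ φ : Matrix m k ℝ) :
    trace (ψᵀ * ψ * (ψᵀ * ψ)) + trace (φᵀ * φ * (φᵀ * φ)) - 2 * trace (ψᵀ * φ * (ψᵀ * φ)) ≤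
      trace (ψᵀ * ψ) ^ 2 + trace (φᵀ * φ) ^ 2 - 2 * trace (ψᵀ * φ) ^ 2 := by
  -- `f a b i j` are the entries of `ψ ⊗ ψ - φ ⊗ φ`, and `f b a i j` those of its swap.
  set f : k → k → m → m → ℝ := fun a b i j => ψ i a * ψ j b - φ i a * φ j b
  have hφψ : trace (φᵀ * ψ) = trace (ψᵀ * φ) := by
    rw [← trace_transpose, transpose_mul, transpose_transpose]
  have hfg : ∑ a, ∑ b, ∑ i, ∑ j, f a b i j * f b a i j =
      trace (ψᵀ * ψ * (ψᵀ * ψ)) + trace (φᵀ * φ * (φᵀ * φ)) - 2 * trace (ψᵀ * φ * (ψᵀ * φ)) := by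
    have hφψφψ : trace (φᵀ * ψ * (φᵀ * ψ)) = trace (ψᵀ * φ * (ψᵀ * φ)) := by
      rw [← trace_transpose]
      simp only [transpose_mul, transpose_transpose, Matrix.mul_assoc]
    simp only [f, mul_sub, sub_mul, Finset.sum_sub_distrib, sum_mul_mul_swap_eq_trace, hφψφψ]
    ring
  have hff : ∑ a, ∑ b, ∑ i, ∑ j, f a b i j * f a b i j =
      trace (ψᵀ * ψ) ^ 2 + trace (φᵀ * φ) ^ 2 - 2 * trace (ψᵀ * φ) ^ 2 := by
    simp only [f, mul_sub, sub_mul, Finset.sum_sub_distrib, sum_mul_mul_eq_trace_mul_trace, hφψ]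
    ring
  have hgg : ∑ a, ∑ b, ∑ i, ∑ j, f b a i j * f b a i j =
      ∑ a, ∑ b, ∑ i, ∑ j, f a b i j * f a b i j := Finset.sum_comm
  have hsq : ∀ a b i j, (f a b i j - f b a i j) ^ 2 =
      f a b i j * f a b i j + f b a i j * f b a i j - 2 * (f a b i j * f b a i j) :=
    fun _ _ _ _ => by ring
  have hnonneg : 0 ≤ ∑ a, ∑ b, ∑ i, ∑ j, (f a b i j - f b a i j) ^ 2 := by positivity
  simp only [hsq, Finset.sum_sub_distrib, Finset.sum_add_distrib, ← Finset.mul_sum] at hnonneg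
  linarith

lemma trace_mul_self_le_trace_transpose_mul_self (R : Matrix k k ℝ) :
    trace (R * R) ≤ trace (Rᵀ * R) := by
  have h : 0 ≤ frobSq (R - Rᵀ) := by unfold frobSq; positivity
  rw [frobSq_eq_trace_mul_transpose, transpose_sub, transpose_transpose, Matrix.sub_mul,
    Matrix.mul_sub, Matrix.mul_sub, trace_sub, trace_sub, trace_sub, ← transpose_mul,
    trace_transpose, trace_mul_comm R Rᵀ] at h
  linarith

lemma trace_mul_mul_mul_comm (P : Matrix m k ℝ) (Q : Matrix k m ℝ) :
    trace (Q * P * (Q * P)) = trace (P * Q * (P * Q)) := by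
  simp only [Matrix.mul_assoc]
  rw [trace_mul_comm]
  simp only [Matrix.mul_assoc]

theorem frobSq_mul_transpose_sub_le (ψ φ : Matrix m k ℝ) :
    frobSq (ψ * ψᵀ - φ * φᵀ) ≤
      trace (ψ * ψᵀ) ^ 2 + trace (φ * φᵀ) ^ 2 - 2 * trace (ψᵀ * φ) ^ 2 := by
  have hswap := trace_transpose_mul_sq_sub_le ψ φ
  have hR := trace_mul_self_le_trace_transpose_mul_self (ψᵀ * φ)
  have hRR : trace ((ψᵀ * φ)ᵀ * (ψᵀ * φ)) = trace (ψ * ψᵀ * (φ * φᵀ)) := by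
    rw [transpose_mul, transpose_transpose]
    simp only [Matrix.mul_assoc]
    rw [trace_mul_comm]
    simp only [Matrix.mul_assoc]
  rw [trace_mul_mul_mul_comm ψ, trace_mul_mul_mul_comm φ, trace_mul_comm ψᵀ,
    trace_mul_comm φᵀ] at hswap
  rw [frobSq_eq_trace_mul_transpose, transpose_sub, transpose_mul, transpose_mul,
    transpose_transpose, transpose_transpose, Matrix.sub_mul, Matrix.mul_sub, Matrix.mul_sub,
    trace_sub, trace_sub, trace_sub, trace_mul_comm (φ * φᵀ) (ψ * ψᵀ)]
  linarith

end Gram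

theorem exists_purifications_trace_eq_fidelity {M : ℕ} {KX KY : Matrix (Fin M) (Fin M) ℝ}
    (hX : KX.PosSemidef) (hY : KY.PosSemidef) :
    ∃ ψ φ : Matrix (Fin M) (Fin M ⊕ Fin M) ℝ,
      ψ * ψᵀ = KX ∧ φ * φᵀ = KY ∧ trace (ψᵀ * φ) = fidelity hX hY := by
  set A := hX.sqrt
  set B := hY.sqrt
  have hA : Aᵀ = A := by
    simpa only [conjTranspose_eq_transpose_of_trivial] using hX.posSemidef_sqrt.isHermitian.eq
  have hB : Bᵀ = B := by
    simpa only [conjTranspose_eq_transpose_of_trivial] using hY.posSemidef_sqrt.isHermitian.eq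
  have hS := sqrt_mul_mul_sqrt_posSemidef hX hY
  have hAB : A * B * (A * B)ᴴ = hS.sqrt * hS.sqrt := by
    rw [hS.sqrt_mul_self, conjTranspose_eq_transpose_of_trivial, transpose_mul, hA, hB,
      Matrix.mul_assoc, ← Matrix.mul_assoc B, hY.sqrt_mul_self, Matrix.mul_assoc]
  obtain ⟨U, hU, hABU⟩ := hS.posSemidef_sqrt.isHermitian.exists_coisometry_mul_eq_fromCols hAB
  rw [conjTranspose_eq_transpose_of_trivial] at hU
  refine ⟨A * fromCols (1 : Matrix (Fin M) (Fin M) ℝ) 0, B * U, ?_, ?_, ?_⟩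
  · rw [transpose_mul, hA, transpose_fromCols, Matrix.mul_assoc,
      ← Matrix.mul_assoc (fromCols _ _), fromCols_mul_fromRows]
    simpa using hX.sqrt_mul_self
  · rw [transpose_mul, hB, Matrix.mul_assoc, ← Matrix.mul_assoc U, hU, Matrix.one_mul,
      hY.sqrt_mul_self]
  · rw [transpose_mul, hA, transpose_fromCols, Matrix.mul_assoc, trace_mul_comm,
      ← Matrix.mul_assoc, hABU, fromCols_mul_fromRows]
    simp [fidelity]

theorem bures_distance_sq_lower_bound_trace_one_general
    {M : ℕ} (KX KY : Matrix (Fin M) (Fin M) ℝ)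
    (hX : KX.PosSemidef) (hY : KY.PosSemidef)
    (htrX : KX.trace = 1) (htrY : KY.trace = 1) :
    2 - Real.sqrt (4 - 2 * frobSq (KX - KY)) ≤ 2 - 2 * fidelity hX hY := by
  obtain ⟨ψ, φ, rfl, rfl, hF⟩ := exists_purifications_trace_eq_fidelity hX hY
  have hbound := frobSq_mul_transpose_sub_le ψ φ
  rw [htrX, htrY, hF] at hbound
  have hF0 : 0 ≤ fidelity hX hY :=
    (sqrt_mul_mul_sqrt_posSemidef hX hY).posSemidef_sqrt.trace_nonneg
  have hsqrt : 2 * fidelity hX hY ≤ Real.sqrt (4 - 2 * frobSq (ψ * ψᵀ - φ * φᵀ)) :=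
    Real.le_sqrt_of_sq_le (by nlinarith)
  linarith

/-- For real symmetric positive semidefinite `M × M` matrices `K_X ≠ K_Y`
with `Tr K_X = Tr K_Y = 1`, the squared Bures distance `d_B² = 2 − 2 F(K_X, K_Y)` satisfies
`d_B² ≥ 2 − √(4 − 2 ‖K_X − K_Y‖_F²)`. -/
theorem bures_distance_sq_lower_bound_trace_one
    {M : ℕ} (KX KY : Matrix (Fin M) (Fin M) ℝ)
    (hX : KX.PosSemidef) (hY : KY.PosSemidef)
    (htrX : KX.trace = 1) (htrY : KY.trace = 1) (hne : KX ≠ KY) :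
    2 - Real.sqrt (4 - 2 * frobSq (KX - KY)) ≤ 2 - 2 * fidelity hX hY :=
  bures_distance_sq_lower_bound_trace_one_general KX KY hX hY htrX htrY
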